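/- arXiv:2110.02377 — 3 statements merged into one kernel-verified Lean document; each statement's English description precedes it below -/
import Mathlib

section
/- Let M be a finite-length graded R-module and m an integer such that: h_M(i) ≤ h_M(i+1) for all i < m; h_M(i) ≥ h_M(i+1) for all i ≥ m; [socle M]_i = 0 for all i < m; and M_{i+1} = R₁·M_i for all i > m. Then a linear form ℓ ∈ R₁ is a weak Lefschetz element of M if and only if both multiplication maps ×ℓ : M_{m−1} → M_m and ×ℓ : M_m → M_{m+1} have maximal rank; equivalently, L_M = L_{M,m−1} ∪ L_{M,m}. -/
/-!
Below `m`, injectivity of `×ℓ` propagates downwards: if `x ∈ M_{i-1}` and `ℓ x = 0`, then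
`ℓ (ℓ' x) = 0` for every linear form `ℓ'`, so injectivity on `M_i` gives `R₁ x = 0`, and `x = 0`
because the socle vanishes in degree `i - 1`. Above `m`, surjectivity propagates upwards, since
`M_{i+2} = R₁ M_{i+1} = R₁ ℓ M_i = ℓ R₁ M_i ⊆ ℓ M_{i+1}`. The chains start from the maps at
`m - 1` and `m`, where rank–nullity and the shape of the Hilbert function turn maximal rank into
injectivity, respectively surjectivity.
-/

open MvPolynomial

/-- The multiplication map `×ℓ : M_t → M_{t+1}` has maximal rank
(is injective or surjective). -/
def MaxRank {k : Type} [Field k] {M : Type} [AddCommGroup M]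
    [Module (MvPolynomial (Fin 3) k) M] [Module k M]
    (𝓜 : ℤ → Submodule k M) (ℓ : MvPolynomial (Fin 3) k) (t : ℤ) : Prop :=
  (∀ x ∈ 𝓜 t, ℓ • x = 0 → x = 0) ∨ (∀ y ∈ 𝓜 (t + 1), ∃ x ∈ 𝓜 t, ℓ • x = y)

open Module

namespace Submodule

variable {k M N : Type*} [Field k] [AddCommGroup M] [Module k M] [AddCommGroup N] [Module k N]
  {f : M →ₗ[k] N} {V : Submodule k M} {W : Submodule k N}

theorem finrank_map_add_finrank_ker_domRestrict [FiniteDimensional k V] :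
    finrank k (V.map f) + finrank k (LinearMap.ker (f.domRestrict V)) = finrank k V := by
  rw [← LinearMap.range_domRestrict]
  exact LinearMap.finrank_range_add_finrank_ker _

theorem disjoint_ker_of_le_map [FiniteDimensional k V] (hWV : W ≤ V.map f)
    (hrank : finrank k V ≤ finrank k W) : Disjoint V (LinearMap.ker f) := by
  have hW : finrank k W ≤ finrank k (V.map f) := finrank_mono hWV
  have := finrank_map_add_finrank_ker_domRestrict (f := f) (V := V)
  rw [← LinearMap.injective_domRestrict_iff, ← LinearMap.ker_eq_bot, ← finrank_eq_zero]
  omega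

theorem le_map_of_disjoint_ker [FiniteDimensional k V] [FiniteDimensional k W]
    (hVW : V.map f ≤ W) (hinj : Disjoint V (LinearMap.ker f))
    (hrank : finrank k W ≤ finrank k V) : W ≤ V.map f := by
  have := finrank_map_add_finrank_ker_domRestrict (f := f) (V := V)
  rw [← LinearMap.injective_domRestrict_iff, ← LinearMap.ker_eq_bot] at hinj
  rw [hinj, finrank_bot] at this
  exact (eq_of_le_of_finrank_le hVW (by omega)).ge

end Submodule

section SMul

variable {R M : Type*} [CommSemiring R] [AddCommMonoid M] [Module R M] {ℓ : R}

theorem eq_zero_of_smul_eq_zero_of_socle {S : Set R} {V W : Set M}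
    (hsoc : ∀ x ∈ V, (∀ s ∈ S, s • x = 0) → x = 0) (hSV : ∀ s ∈ S, Set.MapsTo (s • ·) V W)
    (hW : ∀ y ∈ W, ℓ • y = 0 → y = 0) : ∀ x ∈ V, ℓ • x = 0 → x = 0 := by
  intro x hx hℓx
  refine hsoc x hx fun s hs => hW _ (hSV s hs hx) ?_
  rw [smul_comm, hℓx, smul_zero]

variable {k : Type*} [Field k] [Module k M] [SMulCommClass R k M]

theorem disjoint_ker_toLinearMap_iff {V : Submodule k M} :
    Disjoint V (LinearMap.ker (DistribSMul.toLinearMap k M ℓ)) ↔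
      ∀ x ∈ V, ℓ • x = 0 → x = 0 := by
  simp [Submodule.disjoint_def]

theorem surjOn_smul_iff_subset_map {V : Submodule k M} {W : Set M} :
    Set.SurjOn (ℓ • ·) (V : Set M) W ↔ W ⊆ V.map (DistribSMul.toLinearMap k M ℓ) := by
  rw [Submodule.map_coe]
  rfl

theorem surjOn_smul_of_subset_span {S : Set R} {V W W' : Set M} {V' : Submodule k M}
    (hSV : ∀ s ∈ S, Set.MapsTo (s • ·) V V')
    (hW' : W' ⊆ Submodule.span k {z | ∃ s ∈ S, ∃ x ∈ W, z = s • x})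
    (hsurj : Set.SurjOn (ℓ • ·) V W) : Set.SurjOn (ℓ • ·) (V' : Set M) W' := by
  refine surjOn_smul_iff_subset_map.mpr (hW'.trans (Submodule.span_le.mpr ?_))
  rintro _ ⟨s, hs, x, hx, rfl⟩
  obtain ⟨w, hw, rfl⟩ := hsurj hx
  exact ⟨s • w, hSV s hs hw, smul_comm ℓ s w⟩

end SMul

namespace MaxRank

variable {k : Type} [Field k] {M : Type} [AddCommGroup M] [Module (MvPolynomial (Fin 3) k) M]
  [Module k M] [SMulCommClass (MvPolynomial (Fin 3) k) k M] {𝓜 : ℤ → Submodule k M}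
  {ℓ : MvPolynomial (Fin 3) k} {t : ℤ}

theorem eq_zero_of_smul_eq_zero_of_finrank_le [FiniteDimensional k (𝓜 t)] (h : MaxRank 𝓜 ℓ t)
    (hrank : finrank k (𝓜 t) ≤ finrank k (𝓜 (t + 1))) : ∀ x ∈ 𝓜 t, ℓ • x = 0 → x = 0 :=
  h.elim id fun hsurj => disjoint_ker_toLinearMap_iff.mp <|
    Submodule.disjoint_ker_of_le_map (surjOn_smul_iff_subset_map.mp hsurj) hrank

theorem surjOn_of_finrank_le [FiniteDimensional k (𝓜 t)] [FiniteDimensional k (𝓜 (t + 1))]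
    (hmaps : Set.MapsTo (ℓ • ·) (𝓜 t : Set M) (𝓜 (t + 1))) (h : MaxRank 𝓜 ℓ t)
    (hrank : finrank k (𝓜 (t + 1)) ≤ finrank k (𝓜 t)) :
    Set.SurjOn (ℓ • ·) (𝓜 t : Set M) (𝓜 (t + 1)) :=
  h.elim (fun hinj => surjOn_smul_iff_subset_map.mpr <|
    Submodule.le_map_of_disjoint_ker (Submodule.map_le_iff_le_comap.mpr fun _ hx => hmaps hx)
      (disjoint_ker_toLinearMap_iff.mpr hinj) hrank) id

end MaxRank

theorem stmt6_general (k : Type) [Field k]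
    -- `M` a finite-length graded module over `R = k[x₁,x₂,x₃]`
    (M : Type) [AddCommGroup M] [Module (MvPolynomial (Fin 3) k) M]
    [Module k M] [IsScalarTower k (MvPolynomial (Fin 3) k) M]
    (𝓜 : ℤ → Submodule k M)
    (hsmul : ∀ (j : ℕ) (p : MvPolynomial (Fin 3) k), p.IsHomogeneous j →
      ∀ (i : ℤ), ∀ x ∈ 𝓜 i, p • x ∈ 𝓜 (i + (j : ℤ)))
    (hfd : ∀ i : ℤ, FiniteDimensional k (𝓜 i))
    (m : ℤ)
    -- `h_M(i) ≤ h_M(i+1)` for all `i < m`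
    (hup : ∀ i < m, Module.finrank k (𝓜 i) ≤ Module.finrank k (𝓜 (i + 1)))
    -- `h_M(i) ≥ h_M(i+1)` for all `i ≥ m`
    (hdown : ∀ i, m ≤ i → Module.finrank k (𝓜 (i + 1)) ≤ Module.finrank k (𝓜 i))
    -- `[socle M]_i = 0` for all `i < m`
    (hsoc : ∀ i < m, ∀ x ∈ 𝓜 i,
      (∀ ℓ' : MvPolynomial (Fin 3) k, ℓ'.IsHomogeneous 1 → ℓ' • x = 0) → x = 0)
    -- `M_{i+1} = R₁·M_i` for all `i > m`
    (hgen : ∀ i, m < i → 𝓜 (i + 1) =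
      Submodule.span k {z : M | ∃ ℓ' : MvPolynomial (Fin 3) k,
        ℓ'.IsHomogeneous 1 ∧ ∃ x ∈ 𝓜 i, z = ℓ' • x}) :
    -- `ℓ` is a weak Lefschetz element iff both `×ℓ : M_{m-1} → M_m` and
    -- `×ℓ : M_m → M_{m+1}` have maximal rank
    ∀ ℓ : MvPolynomial (Fin 3) k, ℓ.IsHomogeneous 1 →
      ((∀ t : ℤ, MaxRank 𝓜 ℓ t) ↔ (MaxRank 𝓜 ℓ (m - 1) ∧ MaxRank 𝓜 ℓ m)) := by
  intro ℓ hℓ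
  set R₁ : Set (MvPolynomial (Fin 3) k) := {p | p.IsHomogeneous 1}
  have hR₁ : ∀ p ∈ R₁, ∀ i, Set.MapsTo (p • ·) (𝓜 i : Set M) (𝓜 (i + 1)) :=
    fun p hp i x hx => by simpa using hsmul 1 p hp i x hx
  refine ⟨fun h => ⟨h (m - 1), h m⟩, fun ⟨hm1, hm⟩ t => ?_⟩
  have hinj : ∀ i ≤ m - 1, ∀ x ∈ 𝓜 i, ℓ • x = 0 → x = 0 := by
    refine Int.leInductionDown
      (hm1.eq_zero_of_smul_eq_zero_of_finrank_le (hup (m - 1) (by omega))) fun i hi ih => ?_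
    exact eq_zero_of_smul_eq_zero_of_socle (S := R₁) (hsoc (i - 1) (by omega))
      (fun s hs => by simpa using hR₁ s hs (i - 1)) ih
  have hsurj : ∀ i, m ≤ i → Set.SurjOn (ℓ • ·) (𝓜 i : Set M) (𝓜 (i + 1)) := by
    refine Int.leInduction (hm.surjOn_of_finrank_le (hR₁ ℓ hℓ m) (hdown m le_rfl))
      fun i hi ih => ?_
    exact surjOn_smul_of_subset_span (S := R₁) (fun s hs => hR₁ s hs i)
      (hgen (i + 1) (by omega)).le ih
  rcases lt_or_ge t m with ht | ht
  · exact Or.inl (hinj t (by omega))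
  · exact Or.inr (hsurj t ht)

theorem stmt6 (k : Type) [Field k] [IsAlgClosed k] [CharZero k]
    -- `M` a finite-length graded module over `R = k[x₁,x₂,x₃]`
    (M : Type) [AddCommGroup M] [Module (MvPolynomial (Fin 3) k) M]
    [Module k M] [IsScalarTower k (MvPolynomial (Fin 3) k) M]
    (𝓜 : ℤ → Submodule k M)
    (hdecomp : DirectSum.IsInternal 𝓜)
    (hsmul : ∀ (j : ℕ) (p : MvPolynomial (Fin 3) k), p.IsHomogeneous j →
      ∀ (i : ℤ), ∀ x ∈ 𝓜 i, p • x ∈ 𝓜 (i + (j : ℤ)))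
    (hfd : ∀ i : ℤ, FiniteDimensional k (𝓜 i))
    (hfl : {i : ℤ | 𝓜 i ≠ ⊥}.Finite)
    (m : ℤ)
    -- `h_M(i) ≤ h_M(i+1)` for all `i < m`
    (hup : ∀ i < m, Module.finrank k (𝓜 i) ≤ Module.finrank k (𝓜 (i + 1)))
    -- `h_M(i) ≥ h_M(i+1)` for all `i ≥ m`
    (hdown : ∀ i, m ≤ i → Module.finrank k (𝓜 (i + 1)) ≤ Module.finrank k (𝓜 i))
    -- `[socle M]_i = 0` for all `i < m`
    (hsoc : ∀ i < m, ∀ x ∈ 𝓜 i,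
      (∀ ℓ' : MvPolynomial (Fin 3) k, ℓ'.IsHomogeneous 1 → ℓ' • x = 0) → x = 0)
    -- `M_{i+1} = R₁·M_i` for all `i > m`
    (hgen : ∀ i, m < i → 𝓜 (i + 1) =
      Submodule.span k {z : M | ∃ ℓ' : MvPolynomial (Fin 3) k,
        ℓ'.IsHomogeneous 1 ∧ ∃ x ∈ 𝓜 i, z = ℓ' • x}) :
    -- `ℓ` is a weak Lefschetz element iff both `×ℓ : M_{m-1} → M_m` and
    -- `×ℓ : M_m → M_{m+1}` have maximal rank
    ∀ ℓ : MvPolynomial (Fin 3) k, ℓ.IsHomogeneous 1 →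
      ((∀ t : ℤ, MaxRank 𝓜 ℓ t) ↔ (MaxRank 𝓜 ℓ (m - 1) ∧ MaxRank 𝓜 ℓ m)) :=
  stmt6_general k M 𝓜 hsmul hfd m hup hdown hsoc hgen
end

section
/- Let M be a finite-length graded R-module and m an integer such that: h_M(i) ≤ h_M(i+1) for all i < m; h_M(i) ≥ h_M(i+1) for all i ≥ m; [socle M]_i = 0 for all i < m; M_{i+1} = R₁·M_i for all i > m; and moreover h_M(m) = h_M(m+1). Then a linear form ℓ ∈ R₁ is a weak Lefschetz element of M if and only if the multiplication map ×ℓ : M_m → M_{m+1} is bijective; equivalently, L_M = L_{M,m}. -/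
open MvPolynomial

/-!
Injectivity of `×ℓ` propagates to lower degrees: if `ℓ x = 0` with `x` of degree `t`, then every
linear form `ℓ'` gives `ℓ (ℓ' x) = ℓ' (ℓ x) = 0`, so injectivity in degree `t + 1` kills `R₁ x`, and
`x` lies in the socle, which vanishes below `m`. Dually, surjectivity propagates to higher degrees:
`ℓ' (ℓ w) = ℓ (ℓ' w)` shows `R₁ M_{t+1} ⊆ ℓ M_{t+1}` once `M_{t+1} = ℓ M_t`, and `R₁ M_{t+1}`
spans `M_{t+2}` above `m`. In degree `m` itself, injectivity and surjectivity coincide because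
`h_M(m) = h_M(m+1)`.
-/

section GradedMultiplication

variable {k A M : Type*} [Field k] [CommSemiring A] [AddCommGroup M] [Module k M] [Module A M]

def MulInjectiveAt (𝓜 : ℤ → Submodule k M) (a : A) (t : ℤ) : Prop :=
  ∀ x ∈ 𝓜 t, a • x = 0 → x = 0

def MulSurjectiveAt (𝓜 : ℤ → Submodule k M) (a : A) (t : ℤ) : Prop :=
  ∀ y ∈ 𝓜 (t + 1), ∃ x ∈ 𝓜 t, a • x = y

variable {𝓜 : ℤ → Submodule k M} {L : Set A} {a : A}

theorem mulInjectiveAt_iff_mulSurjectiveAt [SMulCommClass A k M] {t : ℤ}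
    [FiniteDimensional k (𝓜 t)] [FiniteDimensional k (𝓜 (t + 1))]
    (hrank : Module.finrank k (𝓜 t) = Module.finrank k (𝓜 (t + 1)))
    (ha : ∀ x ∈ 𝓜 t, a • x ∈ 𝓜 (t + 1)) :
    MulInjectiveAt 𝓜 a t ↔ MulSurjectiveAt 𝓜 a t := by
  let f : 𝓜 t →ₗ[k] 𝓜 (t + 1) := (DistribSMul.toLinearMap k M a).restrict ha
  have hinj : Function.Injective f ↔ MulInjectiveAt 𝓜 a t := by
    simp only [injective_iff_map_eq_zero, MulInjectiveAt, Subtype.forall, Subtype.ext_iff]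
    rfl
  have hsurj : Function.Surjective f ↔ MulSurjectiveAt 𝓜 a t := by
    refine ⟨fun h y hy => ?_, fun h y => ?_⟩
    · obtain ⟨x, hx⟩ := h ⟨y, hy⟩
      exact ⟨x, x.2, congrArg Subtype.val hx⟩
    · obtain ⟨x, hx, hxy⟩ := h y y.2
      exact ⟨⟨x, hx⟩, Subtype.ext hxy⟩
  rw [← hinj, ← hsurj]
  exact LinearMap.injective_iff_surjective_of_finrank_eq_finrank hrank

theorem MulInjectiveAt.of_succ {t : ℤ} (hL : ∀ b ∈ L, ∀ x ∈ 𝓜 t, b • x ∈ 𝓜 (t + 1))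
    (hsoc : ∀ x ∈ 𝓜 t, (∀ b ∈ L, b • x = 0) → x = 0) (h : MulInjectiveAt 𝓜 a (t + 1)) :
    MulInjectiveAt 𝓜 a t := by
  intro x hx hax
  refine hsoc x hx fun b hb => h _ (hL b hb x hx) ?_
  rw [smul_comm, hax, smul_zero]

theorem MulSurjectiveAt.succ [SMulCommClass A k M] {t : ℤ}
    (hL : ∀ b ∈ L, ∀ x ∈ 𝓜 t, b • x ∈ 𝓜 (t + 1))
    (hgen : 𝓜 (t + 1 + 1) = Submodule.span k {z | ∃ b ∈ L, ∃ x ∈ 𝓜 (t + 1), z = b • x})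
    (h : MulSurjectiveAt 𝓜 a t) : MulSurjectiveAt 𝓜 a (t + 1) := by
  have hle : 𝓜 (t + 1 + 1) ≤ (𝓜 (t + 1)).map (DistribSMul.toLinearMap k M a) := by
    rw [hgen, Submodule.span_le]
    rintro _ ⟨b, hb, x, hx, rfl⟩
    obtain ⟨w, hw, rfl⟩ := h x hx
    exact ⟨b • w, hL b hb w hw, smul_comm a b w⟩
  intro y hy
  obtain ⟨x, hx, rfl⟩ := hle hy
  exact ⟨x, hx, rfl⟩

variable {m : ℤ}

theorem MulInjectiveAt.of_le (hL : ∀ b ∈ L, ∀ i, ∀ x ∈ 𝓜 i, b • x ∈ 𝓜 (i + 1))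
    (hsoc : ∀ i < m, ∀ x ∈ 𝓜 i, (∀ b ∈ L, b • x = 0) → x = 0) (h : MulInjectiveAt 𝓜 a m) :
    ∀ t ≤ m, MulInjectiveAt 𝓜 a t := by
  refine Int.leInductionDown h fun t ht ih =>
    MulInjectiveAt.of_succ (hL · · _) (hsoc _ (by omega)) ?_
  rwa [sub_add_cancel]

theorem MulSurjectiveAt.of_ge [SMulCommClass A k M]
    (hL : ∀ b ∈ L, ∀ i, ∀ x ∈ 𝓜 i, b • x ∈ 𝓜 (i + 1))
    (hgen : ∀ i, m < i →
      𝓜 (i + 1) = Submodule.span k {z | ∃ b ∈ L, ∃ x ∈ 𝓜 i, z = b • x})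
    (h : MulSurjectiveAt 𝓜 a m) : ∀ t, m ≤ t → MulSurjectiveAt 𝓜 a t :=
  Int.leInduction h fun t ht ih => ih.succ (hL · · t) (hgen (t + 1) (by omega))

theorem forall_mulInjectiveAt_or_mulSurjectiveAt_iff [SMulCommClass A k M]
    [FiniteDimensional k (𝓜 m)] [FiniteDimensional k (𝓜 (m + 1))]
    (hL : ∀ b ∈ L, ∀ i, ∀ x ∈ 𝓜 i, b • x ∈ 𝓜 (i + 1))
    (hsoc : ∀ i < m, ∀ x ∈ 𝓜 i, (∀ b ∈ L, b • x = 0) → x = 0)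
    (hgen : ∀ i, m < i →
      𝓜 (i + 1) = Submodule.span k {z | ∃ b ∈ L, ∃ x ∈ 𝓜 i, z = b • x})
    (hrank : Module.finrank k (𝓜 m) = Module.finrank k (𝓜 (m + 1)))
    (ha : ∀ x ∈ 𝓜 m, a • x ∈ 𝓜 (m + 1)) :
    (∀ t, MulInjectiveAt 𝓜 a t ∨ MulSurjectiveAt 𝓜 a t) ↔
      MulInjectiveAt 𝓜 a m ∧ MulSurjectiveAt 𝓜 a m := by
  have hbij := mulInjectiveAt_iff_mulSurjectiveAt hrank ha
  constructor
  · intro h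
    rcases h m with hinj | hsurj
    · exact ⟨hinj, hbij.mp hinj⟩
    · exact ⟨hbij.mpr hsurj, hsurj⟩
  · rintro ⟨hinj, hsurj⟩ t
    rcases le_or_gt t m with htm | hmt
    · exact Or.inl (hinj.of_le hL hsoc t htm)
    · exact Or.inr (hsurj.of_ge hL hgen t hmt.le)

end GradedMultiplication

theorem stmt7_general (k : Type) [Field k]
    -- `M` a finite-length graded module over `R = k[x₁,x₂,x₃]`
    (M : Type) [AddCommGroup M] [Module (MvPolynomial (Fin 3) k) M]
    [Module k M] [IsScalarTower k (MvPolynomial (Fin 3) k) M]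
    (𝓜 : ℤ → Submodule k M)
    (hsmul : ∀ (j : ℕ) (p : MvPolynomial (Fin 3) k), p.IsHomogeneous j →
      ∀ (i : ℤ), ∀ x ∈ 𝓜 i, p • x ∈ 𝓜 (i + (j : ℤ)))
    (hfd : ∀ i : ℤ, FiniteDimensional k (𝓜 i))
    (m : ℤ)
    -- `[socle M]_i = 0` for all `i < m`
    (hsoc : ∀ i < m, ∀ x ∈ 𝓜 i,
      (∀ ℓ' : MvPolynomial (Fin 3) k, ℓ'.IsHomogeneous 1 → ℓ' • x = 0) → x = 0)
    -- `M_{i+1} = R₁·M_i` for all `i > m`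
    (hgen : ∀ i, m < i → 𝓜 (i + 1) =
      Submodule.span k {z : M | ∃ ℓ' : MvPolynomial (Fin 3) k,
        ℓ'.IsHomogeneous 1 ∧ ∃ x ∈ 𝓜 i, z = ℓ' • x})
    -- moreover `h_M(m) = h_M(m+1)`
    (heq : Module.finrank k (𝓜 m) = Module.finrank k (𝓜 (m + 1))) :
    -- `ℓ` is a weak Lefschetz element iff `×ℓ : M_m → M_{m+1}` is bijective
    ∀ ℓ : MvPolynomial (Fin 3) k, ℓ.IsHomogeneous 1 →
      ((∀ t : ℤ, MaxRank 𝓜 ℓ t) ↔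
        ((∀ x ∈ 𝓜 m, ℓ • x = 0 → x = 0) ∧
         (∀ y ∈ 𝓜 (m + 1), ∃ x ∈ 𝓜 m, ℓ • x = y))) := by
  intro ℓ hℓ
  have hlinear : ∀ p ∈ {p : MvPolynomial (Fin 3) k | p.IsHomogeneous 1},
      ∀ i, ∀ x ∈ 𝓜 i, p • x ∈ 𝓜 (i + 1) := fun p hp i x hx => by
    simpa using hsmul 1 p hp i x hx
  exact forall_mulInjectiveAt_or_mulSurjectiveAt_iff hlinear hsoc hgen heq (hlinear ℓ hℓ m)

theorem stmt7 (k : Type) [Field k] [IsAlgClosed k] [CharZero k]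
    -- `M` a finite-length graded module over `R = k[x₁,x₂,x₃]`
    (M : Type) [AddCommGroup M] [Module (MvPolynomial (Fin 3) k) M]
    [Module k M] [IsScalarTower k (MvPolynomial (Fin 3) k) M]
    (𝓜 : ℤ → Submodule k M)
    (hdecomp : DirectSum.IsInternal 𝓜)
    (hsmul : ∀ (j : ℕ) (p : MvPolynomial (Fin 3) k), p.IsHomogeneous j →
      ∀ (i : ℤ), ∀ x ∈ 𝓜 i, p • x ∈ 𝓜 (i + (j : ℤ)))
    (hfd : ∀ i : ℤ, FiniteDimensional k (𝓜 i))
    (hfl : {i : ℤ | 𝓜 i ≠ ⊥}.Finite)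
    (m : ℤ)
    -- `h_M(i) ≤ h_M(i+1)` for all `i < m`
    (hup : ∀ i < m, Module.finrank k (𝓜 i) ≤ Module.finrank k (𝓜 (i + 1)))
    -- `h_M(i) ≥ h_M(i+1)` for all `i ≥ m`
    (hdown : ∀ i, m ≤ i → Module.finrank k (𝓜 (i + 1)) ≤ Module.finrank k (𝓜 i))
    -- `[socle M]_i = 0` for all `i < m`
    (hsoc : ∀ i < m, ∀ x ∈ 𝓜 i,
      (∀ ℓ' : MvPolynomial (Fin 3) k, ℓ'.IsHomogeneous 1 → ℓ' • x = 0) → x = 0)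
    -- `M_{i+1} = R₁·M_i` for all `i > m`
    (hgen : ∀ i, m < i → 𝓜 (i + 1) =
      Submodule.span k {z : M | ∃ ℓ' : MvPolynomial (Fin 3) k,
        ℓ'.IsHomogeneous 1 ∧ ∃ x ∈ 𝓜 i, z = ℓ' • x})
    -- moreover `h_M(m) = h_M(m+1)`
    (heq : Module.finrank k (𝓜 m) = Module.finrank k (𝓜 (m + 1))) :
    -- `ℓ` is a weak Lefschetz element iff `×ℓ : M_m → M_{m+1}` is bijective
    ∀ ℓ : MvPolynomial (Fin 3) k, ℓ.IsHomogeneous 1 →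
      ((∀ t : ℤ, MaxRank 𝓜 ℓ t) ↔
        ((∀ x ∈ 𝓜 m, ℓ • x = 0 → x = 0) ∧
         (∀ y ∈ 𝓜 (m + 1), ∃ x ∈ 𝓜 m, ℓ • x = y))) :=
  stmt7_general k M 𝓜 hsmul hfd m hsoc hgen heq
end

section
/- Let M be a graded R-module, ℓ ∈ R₁ a linear form, and i an integer. If the multiplication map ×ℓ : M_{i+1} → M_{i+2} is injective and [socle M]_i = 0 (no nonzero element of M_i is annihilated by every linear form), then the multiplication map ×ℓ : M_i → M_{i+1} is injective. -/
open MvPolynomial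

theorem stmt8_general (k : Type) [Field k]
    -- `M` a graded module over `R = k[x₁,x₂,x₃]`
    (M : Type) [AddCommGroup M] [Module (MvPolynomial (Fin 3) k) M]
    [Module k M]
    (𝓜 : ℤ → Submodule k M)
    (hsmul : ∀ (m : ℕ) (p : MvPolynomial (Fin 3) k), p.IsHomogeneous m →
      ∀ (i : ℤ), ∀ x ∈ 𝓜 i, p • x ∈ 𝓜 (i + (m : ℤ)))
    -- `ℓ ∈ R₁` a linear form, `i` an integer
    (ℓ : MvPolynomial (Fin 3) k) (i : ℤ)
    -- `×ℓ : M_{i+1} → M_{i+2}` is injective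
    (hinj : ∀ x ∈ 𝓜 (i + 1), ℓ • x = 0 → x = 0)
    -- `[socle M]_i = 0`
    (hsoc : ∀ x ∈ 𝓜 i,
      (∀ ℓ' : MvPolynomial (Fin 3) k, ℓ'.IsHomogeneous 1 → ℓ' • x = 0) → x = 0) :
    -- then `×ℓ : M_i → M_{i+1}` is injective
    ∀ x ∈ 𝓜 i, ℓ • x = 0 → x = 0 := by
  intro x hx hℓx
  -- each `ℓ' • x` lies in `M_{i+1}` and is killed by `ℓ`, since `ℓ • ℓ' • x = ℓ' • ℓ • x = 0`
  refine hsoc x hx fun ℓ' hℓ' => hinj _ ?_ ?_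
  · simpa using hsmul 1 ℓ' hℓ' i x hx
  · rw [smul_comm, hℓx, smul_zero]

theorem stmt8 (k : Type) [Field k] [IsAlgClosed k] [CharZero k]
    -- `M` a graded module over `R = k[x₁,x₂,x₃]`
    (M : Type) [AddCommGroup M] [Module (MvPolynomial (Fin 3) k) M]
    [Module k M] [IsScalarTower k (MvPolynomial (Fin 3) k) M]
    (𝓜 : ℤ → Submodule k M)
    (hdecomp : DirectSum.IsInternal 𝓜)
    (hsmul : ∀ (m : ℕ) (p : MvPolynomial (Fin 3) k), p.IsHomogeneous m →
      ∀ (i : ℤ), ∀ x ∈ 𝓜 i, p • x ∈ 𝓜 (i + (m : ℤ)))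
    -- `ℓ ∈ R₁` a linear form, `i` an integer
    (ℓ : MvPolynomial (Fin 3) k) (hℓ : ℓ.IsHomogeneous 1) (i : ℤ)
    -- `×ℓ : M_{i+1} → M_{i+2}` is injective
    (hinj : ∀ x ∈ 𝓜 (i + 1), ℓ • x = 0 → x = 0)
    -- `[socle M]_i = 0`
    (hsoc : ∀ x ∈ 𝓜 i,
      (∀ ℓ' : MvPolynomial (Fin 3) k, ℓ'.IsHomogeneous 1 → ℓ' • x = 0) → x = 0) :
    -- then `×ℓ : M_i → M_{i+1}` is injective
    ∀ x ∈ 𝓜 i, ℓ • x = 0 → x = 0 :=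
  stmt8_general k M 𝓜 hsmul ℓ i hinj hsoc
end
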